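/- arXiv:2509.09649 — 2 statements merged into one kernel-verified Lean document; each statement's English description precedes it below -/
import Mathlib

section
/- Let 0 < η < 1/2 and let M be a finite set of positive integers all of whose prime factors are at most y. Then ∑_{m,n ∈ M} ((m,n)/[m,n])^{1/2−η} ≤ |M| · ∏_{p ≤ y} (1 + 2/(p^{1/2−η} − 1)). -/
open Finset

lemma aux_geom (x : ℝ) (hx0 : 0 ≤ x) (hx1 : x < 1) (a K : ℕ) :
    ∑ k ∈ range K, x ^ Nat.dist a k ≤ (1 - x)⁻¹ + ((1 - x)⁻¹ - 1) := by
  have hsummable := summable_geometric_of_lt_one hx0 hx1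
  have hts := tsum_geometric_of_lt_one hx0 hx1
  have h1 : ∑ k ∈ (range K).filter (· ≤ a), x ^ Nat.dist a k ≤ (1 - x)⁻¹ := by
    have e1 : ∑ k ∈ (range K).filter (· ≤ a), x ^ Nat.dist a k
        = ∑ j ∈ ((range K).filter (· ≤ a)).image (a - ·), x ^ j := by
      rw [Finset.sum_image (by intro k hk k' hk' h; simp at hk hk'; dsimp only at h; omega)]
      refine Finset.sum_congr rfl fun k hk => ?_
      simp only [Finset.mem_filter] at hk
      congr 1
      simp [Nat.dist]; omega
    rw [e1, ← hts]
    exact Summable.sum_le_tsum _ (fun j _ => pow_nonneg hx0 j) hsummable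
  have h2 : ∑ k ∈ (range K).filter (fun k => ¬ k ≤ a), x ^ Nat.dist a k ≤ (1 - x)⁻¹ - 1 := by
    have e1 : ∑ k ∈ (range K).filter (fun k => ¬ k ≤ a), x ^ Nat.dist a k
        = x * ∑ j ∈ ((range K).filter (fun k => ¬ k ≤ a)).image (· - (a + 1)), x ^ j := by
      rw [Finset.sum_image (by intro k hk k' hk' h; simp at hk hk'; dsimp only at h; omega), Finset.mul_sum]
      refine Finset.sum_congr rfl fun k hk => ?_
      simp only [Finset.mem_filter] at hk
      rw [← pow_succ']
      congr 1
      simp [Nat.dist]; omega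
    have h3 : ∑ j ∈ ((range K).filter (fun k => ¬ k ≤ a)).image (· - (a + 1)), x ^ j
        ≤ (1 - x)⁻¹ := by
      rw [← hts]
      exact Summable.sum_le_tsum _ (fun j _ => pow_nonneg hx0 j) hsummable
    have h1x : 0 < 1 - x := by linarith
    calc ∑ k ∈ (range K).filter (fun k => ¬ k ≤ a), x ^ Nat.dist a k
        = x * ∑ j ∈ ((range K).filter (fun k => ¬ k ≤ a)).image (· - (a + 1)), x ^ j := e1
      _ ≤ x * (1 - x)⁻¹ := mul_le_mul_of_nonneg_left h3 hx0
      _ = (1 - x)⁻¹ - 1 := by field_simp; ring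
  calc ∑ k ∈ range K, x ^ Nat.dist a k
      = ∑ k ∈ (range K).filter (· ≤ a), x ^ Nat.dist a k
        + ∑ k ∈ (range K).filter (fun k => ¬ k ≤ a), x ^ Nat.dist a k :=
        (Finset.sum_filter_add_sum_filter_not _ _ _).symm
    _ ≤ (1 - x)⁻¹ + ((1 - x)⁻¹ - 1) := add_le_add h1 h2

lemma aux_id (ε : ℝ) (y m n : ℕ) (hm : 0 < m) (hn : 0 < n)
    (hms : ∀ p : ℕ, p.Prime → p ∣ m → p ≤ y) (hns : ∀ p : ℕ, p.Prime → p ∣ n → p ≤ y) :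
    ((Nat.gcd m n : ℝ) / (Nat.lcm m n : ℝ)) ^ ε =
      ∏ p ∈ (Finset.range (y + 1)).filter Nat.Prime,
        ((p : ℝ) ^ (-ε)) ^ (Nat.dist (m.factorization p) (n.factorization p)) := by
  have hg : 0 < Nat.gcd m n := Nat.gcd_pos_of_pos_left _ hm
  have hl : 0 < Nat.lcm m n := Nat.lcm_pos hm hn
  have hgl : Nat.gcd m n ∣ Nat.lcm m n := (Nat.gcd_dvd_left m n).trans (Nat.dvd_lcm_left m n)
  set N := Nat.lcm m n / Nat.gcd m n with hNdef
  have hlgN : Nat.lcm m n = Nat.gcd m n * N := (Nat.mul_div_cancel' hgl).symm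
  have hN0 : N ≠ 0 := by
    intro h; rw [h, mul_zero] at hlgN; omega
  have hfact : ∀ p : ℕ, N.factorization p = Nat.dist (m.factorization p) (n.factorization p) := by
    intro p
    rw [hNdef, Nat.factorization_div hgl, Finsupp.tsub_apply,
      Nat.factorization_lcm hm.ne' hn.ne', Nat.factorization_gcd hm.ne' hn.ne',
      Finsupp.sup_apply, Finsupp.inf_apply]
    simp only [Nat.dist]
    omega
  have hsupp : N.factorization.support ⊆ (Finset.range (y + 1)).filter Nat.Prime := by
    intro p hp
    rw [Nat.support_factorization] at hp
    have hpp : p.Prime := Nat.prime_of_mem_primeFactors hp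
    have hpd : p ∣ N := Nat.dvd_of_mem_primeFactors hp
    have hpl : p ∣ Nat.lcm m n := hpd.trans ⟨Nat.gcd m n, by rw [hlgN]; ring⟩
    have hpmn : p ∣ m * n := hpl.trans (Nat.lcm_dvd (Dvd.intro n rfl) (Dvd.intro_left m rfl))
    have : p ≤ y := by
      rcases (Nat.Prime.dvd_mul hpp).mp hpmn with h | h
      · exact hms p hpp h
      · exact hns p hpp h
    simp only [Finset.mem_filter, Finset.mem_range]
    exact ⟨by omega, hpp⟩
  have hNprod : (N : ℝ) = ∏ p ∈ (Finset.range (y + 1)).filter Nat.Prime,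
      (p : ℝ) ^ (N.factorization p) := by
    conv_lhs => rw [← Nat.factorization_prod_pow_eq_self hN0]
    rw [Finsupp.prod_of_support_subset _ hsupp _ (fun p _ => pow_zero p)]
    push_cast
    rfl
  have hql : (Nat.gcd m n : ℝ) / (Nat.lcm m n : ℝ) = (N : ℝ)⁻¹ := by
    rw [hlgN]
    push_cast
    have hgR : ((Nat.gcd m n : ℕ) : ℝ) ≠ 0 := Nat.cast_ne_zero.mpr hg.ne'
    have hNR : ((N : ℕ) : ℝ) ≠ 0 := Nat.cast_ne_zero.mpr hN0
    field_simp
  rw [hql, Real.inv_rpow (Nat.cast_nonneg N), ← Real.rpow_neg (Nat.cast_nonneg N), hNprod,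
    ← Real.finset_prod_rpow _ _ (fun p _ => by positivity)]
  refine Finset.prod_congr rfl fun p hp => ?_
  rw [← hfact p, ← Real.rpow_natCast (p:ℝ) (N.factorization p),
    ← Real.rpow_mul (Nat.cast_nonneg p), mul_comm, Real.rpow_mul (Nat.cast_nonneg p),
    Real.rpow_natCast]

lemma aux_count (P M : Finset ℕ) (K : ℕ) (w : ℕ → ℕ → ℝ)
    (hw : ∀ p ∈ P, ∀ k, 0 ≤ w p k)
    (hK : ∀ n ∈ M, ∀ p : ℕ, n.factorization p ∈ Finset.range K)
    (hinj : ∀ n ∈ M, ∀ n' ∈ M, (∀ p ∈ P, n.factorization p = n'.factorization p) → n = n') :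
    ∑ n ∈ M, ∏ p ∈ P, w p (n.factorization p) ≤ ∏ p ∈ P, ∑ k ∈ range K, w p k := by
  classical
  rw [Finset.prod_sum]
  set e : ℕ → (∀ p ∈ P, ℕ) := fun n => fun p _ => n.factorization p with he
  have hinj2 : ∀ n ∈ M, ∀ n' ∈ M, e n = e n' → n = n' := fun n hn n' hn' h =>
    hinj n hn n' hn' (fun p hp => congrFun (congrFun h p) hp)
  have hsub : M.image e ⊆ P.pi (fun _ => Finset.range K) := by
    intro g hg
    simp only [Finset.mem_image] at hg
    obtain ⟨n, hn, rfl⟩ := hg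
    rw [Finset.mem_pi]
    intro p hp
    exact hK n hn p
  calc ∑ n ∈ M, ∏ p ∈ P, w p (n.factorization p)
      = ∑ n ∈ M, ∏ q ∈ P.attach, w q.1 (e n q.1 q.2) := by
        refine Finset.sum_congr rfl fun n _ => ?_
        exact (Finset.prod_attach P (fun p => w p (n.factorization p))).symm
    _ = ∑ g ∈ M.image e, ∏ q ∈ P.attach, w q.1 (g q.1 q.2) :=
        (Finset.sum_image (f := fun g : ∀ p ∈ P, ℕ => ∏ q ∈ P.attach, w q.1 (g q.1 q.2))
          hinj2).symm
    _ ≤ ∑ g ∈ P.pi (fun _ => Finset.range K), ∏ q ∈ P.attach, w q.1 (g q.1 q.2) :=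
        Finset.sum_le_sum_of_subset_of_nonneg hsub
          (fun g _ _ => Finset.prod_nonneg fun q _ => hw q.1 q.2 _)

/-- GCD-sum bound for smooth sets: if every element of `M` is a positive `y`-smooth
integer and `0 < η < 1/2`, then
`∑_{m,n ∈ M} (gcd(m,n)/lcm(m,n))^{1/2-η} ≤ |M| * ∏_{p ≤ y prime} (1 + 2/(p^{1/2-η} - 1))`. -/
theorem stmt_8 (η : ℝ) (hη0 : 0 < η) (hη : η < 1 / 2) (y : ℕ) (M : Finset ℕ)
    (hpos : ∀ m ∈ M, 0 < m)
    (hsmooth : ∀ m ∈ M, ∀ p : ℕ, p.Prime → p ∣ m → p ≤ y) :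
    ∑ m ∈ M, ∑ n ∈ M, ((Nat.gcd m n : ℝ) / (Nat.lcm m n : ℝ)) ^ ((1 : ℝ) / 2 - η) ≤
      (M.card : ℝ) *
        ∏ p ∈ (Finset.range (y + 1)).filter Nat.Prime,
          (1 + 2 / ((p : ℝ) ^ ((1 : ℝ) / 2 - η) - 1)) := by
  classical
  set ε : ℝ := (1 : ℝ) / 2 - η with hεdef
  have hε0 : 0 < ε := by rw [hεdef]; linarith
  set P := (Finset.range (y + 1)).filter Nat.Prime with hP
  set K := M.sup id + 1 with hKdef
  have hK : ∀ n ∈ M, ∀ p : ℕ, n.factorization p ∈ Finset.range K := by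
    intro n hn p
    rw [Finset.mem_range]
    have h1 : n.factorization p < n := Nat.factorization_lt p (hpos n hn).ne'
    have h2 : n ≤ M.sup id := Finset.le_sup (f := id) hn
    omega
  have hinj : ∀ n ∈ M, ∀ n' ∈ M,
      (∀ p ∈ P, n.factorization p = n'.factorization p) → n = n' := by
    intro n hn n' hn' h
    refine Nat.factorization_inj (hpos n hn).ne' (hpos n' hn').ne' ?_
    ext p
    by_cases hp : p ∈ P
    · exact h p hp
    · by_cases hpp : p.Prime
      · have hpy : ¬ p ≤ y := fun hle =>
          hp (Finset.mem_filter.mpr ⟨Finset.mem_range.mpr (by omega), hpp⟩)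
        rw [Nat.factorization_eq_zero_of_not_dvd (fun hd => hpy (hsmooth n hn p hpp hd)),
          Nat.factorization_eq_zero_of_not_dvd (fun hd => hpy (hsmooth n' hn' p hpp hd))]
      · simp [Nat.factorization_eq_zero_of_not_prime _ hpp]
  -- per prime facts
  have hprime : ∀ p ∈ P, (1 : ℝ) < (p : ℝ) := by
    intro p hp
    have : p.Prime := (Finset.mem_filter.mp hp).2
    exact_mod_cast this.one_lt
  have hx0 : ∀ p ∈ P, (0 : ℝ) ≤ (p : ℝ) ^ (-ε) := fun p _ => Real.rpow_nonneg (by positivity) _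
  have hx1 : ∀ p ∈ P, (p : ℝ) ^ (-ε) < 1 := fun p hp =>
    Real.rpow_lt_one_of_one_lt_of_neg (hprime p hp) (by linarith)
  have ht1 : ∀ p ∈ P, (1 : ℝ) < (p : ℝ) ^ ε := fun p hp =>
    Real.one_lt_rpow_iff_of_pos (by linarith [hprime p hp]) |>.mpr (Or.inl ⟨hprime p hp, hε0⟩)
  have hbound : ∀ p ∈ P, ∀ a : ℕ,
      ∑ k ∈ range K, ((p : ℝ) ^ (-ε)) ^ Nat.dist a k ≤ 1 + 2 / ((p : ℝ) ^ ε - 1) := by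
    intro p hp a
    have hgeo := aux_geom _ (hx0 p hp) (hx1 p hp) a K
    have hteq : (1 - (p : ℝ) ^ (-ε))⁻¹ + ((1 - (p : ℝ) ^ (-ε))⁻¹ - 1)
        = 1 + 2 / ((p : ℝ) ^ ε - 1) := by
      have hxe : (p : ℝ) ^ (-ε) = ((p : ℝ) ^ ε)⁻¹ := Real.rpow_neg (by positivity) ε
      rw [hxe]
      have ht := ht1 p hp
      have ht0 : ((p : ℝ) ^ ε) ≠ 0 := by positivity
      have ht1' : ((p : ℝ) ^ ε) - 1 ≠ 0 := by intro h; nlinarith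
      have hinv : ((p : ℝ) ^ ε)⁻¹ < 1 := inv_lt_one_of_one_lt₀ ht
      have h1x : (1 : ℝ) - ((p : ℝ) ^ ε)⁻¹ ≠ 0 := by
        have : (0:ℝ) < 1 - ((p : ℝ) ^ ε)⁻¹ := by linarith
        exact this.ne'
      field_simp
      ring
    linarith [hgeo, hteq.le]
  -- main chain
  have key : ∀ m ∈ M,
      ∑ n ∈ M, ((Nat.gcd m n : ℝ) / (Nat.lcm m n : ℝ)) ^ ε
        ≤ ∏ p ∈ P, (1 + 2 / ((p : ℝ) ^ ε - 1)) := by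
    intro m hm
    have hrw : ∑ n ∈ M, ((Nat.gcd m n : ℝ) / (Nat.lcm m n : ℝ)) ^ ε
        = ∑ n ∈ M, ∏ p ∈ P, ((p : ℝ) ^ (-ε)) ^ (Nat.dist (m.factorization p) (n.factorization p)) := by
      refine Finset.sum_congr rfl fun n hn => ?_
      exact aux_id ε y m n (hpos m hm) (hpos n hn) (hsmooth m hm) (hsmooth n hn)
    rw [hrw]
    calc ∑ n ∈ M, ∏ p ∈ P, ((p : ℝ) ^ (-ε)) ^ (Nat.dist (m.factorization p) (n.factorization p))
        ≤ ∏ p ∈ P, ∑ k ∈ range K, ((p : ℝ) ^ (-ε)) ^ (Nat.dist (m.factorization p) k) :=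
          aux_count P M K (fun p k => ((p : ℝ) ^ (-ε)) ^ (Nat.dist (m.factorization p) k))
            (fun p hp k => pow_nonneg (hx0 p hp) _) hK hinj
      _ ≤ ∏ p ∈ P, (1 + 2 / ((p : ℝ) ^ ε - 1)) := by
          refine Finset.prod_le_prod (fun p hp => Finset.sum_nonneg fun k _ =>
            pow_nonneg (hx0 p hp) _) (fun p hp => hbound p hp _)
  calc ∑ m ∈ M, ∑ n ∈ M, ((Nat.gcd m n : ℝ) / (Nat.lcm m n : ℝ)) ^ ε
      ≤ ∑ m ∈ M, ∏ p ∈ P, (1 + 2 / ((p : ℝ) ^ ε - 1)) := Finset.sum_le_sum key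
    _ = (M.card : ℝ) * ∏ p ∈ P, (1 + 2 / ((p : ℝ) ^ ε - 1)) := by
        rw [Finset.sum_const, nsmul_eq_mul]
end

section
/- With M, q, M_j, M' and r as above, for any positive integers k, ℓ: ∑_{m',n' ∈ M', q | m'k − n'ℓ} r(m')·r(n') ≥ #{(m,n) ∈ M × M : mk = nℓ}. -/
/-- With `M'` a set of minimal representatives of the residue classes of `M` mod `q` and
weights `r(m') = √|M_j|`, for any positive integers `k, ℓ`:
`∑_{m',n' ∈ M', m'k ≡ n'ℓ (mod q)} r(m') r(n') ≥ #{(m,n) ∈ M×M : mk = nℓ}`. -/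
theorem stmt_11 (M : Finset ℕ) (hpos : ∀ m ∈ M, 0 < m) (q : ℕ) (hq : 0 < q)
    (M' : Finset ℕ) (r : ℕ → ℝ)
    (hsub : M' ⊆ M)
    (hrep : ∀ m ∈ M, ∃! m', m' ∈ M' ∧ m' % q = m % q)
    (hmin : ∀ m' ∈ M', ∀ m ∈ M, m % q = m' % q → m' ≤ m)
    (hr : ∀ m' ∈ M',
      r m' = Real.sqrt ((M.filter (fun m => m % q = m' % q)).card))
    (k l : ℕ) (hk : 0 < k) (hl : 0 < l) :
    ((((M ×ˢ M).filter (fun p => p.1 * k = p.2 * l)).card : ℝ)) ≤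
      ∑ p ∈ (M' ×ˢ M').filter (fun p => (p.1 * k) % q = (p.2 * l) % q),
        r p.1 * r p.2 := by
  classical
  set f : ℕ → ℕ := fun m =>
    if h : ∃ m', m' ∈ M' ∧ m' % q = m % q then h.choose else 0 with hf
  have hfspec : ∀ m ∈ M, f m ∈ M' ∧ (f m) % q = m % q := by
    intro m hm
    obtain ⟨m', hm'⟩ := hrep m hm
    have h : ∃ m', m' ∈ M' ∧ m' % q = m % q := ⟨m', hm'.1⟩
    simp only [hf, dif_pos h]
    exact h.choose_spec
  set S := (M ×ˢ M).filter (fun p => p.1 * k = p.2 * l) with hS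
  set T := (M' ×ˢ M').filter (fun p => (p.1 * k) % q = (p.2 * l) % q) with hT
  have hmap : ∀ p ∈ S, (f p.1, f p.2) ∈ T := by
    intro p hp
    simp only [hS, Finset.mem_filter, Finset.mem_product] at hp
    obtain ⟨⟨h1, h2⟩, h3⟩ := hp
    have e1 := hfspec p.1 h1
    have e2 := hfspec p.2 h2
    simp only [hT, Finset.mem_filter, Finset.mem_product]
    refine ⟨⟨e1.1, e2.1⟩, ?_⟩
    have ha : (f p.1 * k) % q = (p.1 * k) % q := Nat.ModEq.mul_right k e1.2
    have hb : (f p.2 * l) % q = (p.2 * l) % q := Nat.ModEq.mul_right l e2.2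
    rw [ha, hb, h3]
  have hcard : S.card = ∑ t ∈ T, (S.filter (fun p => (f p.1, f p.2) = t)).card :=
    Finset.card_eq_sum_card_fiberwise hmap
  have key : ∀ a b : ℝ, 0 ≤ a → 0 ≤ b → min a b ≤ Real.sqrt a * Real.sqrt b := by
    intro a b ha hb
    rcases le_total a b with h | h
    · calc min a b ≤ a := min_le_left _ _
        _ = Real.sqrt a * Real.sqrt a := (Real.mul_self_sqrt ha).symm
        _ ≤ Real.sqrt a * Real.sqrt b := by
            gcongr
    · calc min a b ≤ b := min_le_right _ _
        _ = Real.sqrt b * Real.sqrt b := (Real.mul_self_sqrt hb).symm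
        _ ≤ Real.sqrt a * Real.sqrt b := by
            gcongr
  have hfiber : ∀ t ∈ T,
      ((S.filter (fun p => (f p.1, f p.2) = t)).card : ℝ) ≤ r t.1 * r t.2 := by
    intro t ht
    simp only [hT, Finset.mem_filter, Finset.mem_product] at ht
    obtain ⟨⟨ha, hb⟩, _⟩ := ht
    set Fib := S.filter (fun p => (f p.1, f p.2) = t) with hFib
    have hmem : ∀ p ∈ Fib, (p.1 ∈ M ∧ p.1 % q = t.1 % q) ∧
        (p.2 ∈ M ∧ p.2 % q = t.2 % q) ∧ p.1 * k = p.2 * l := by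
      intro p hp
      simp only [hFib, hS, Finset.mem_filter, Finset.mem_product, Prod.ext_iff] at hp
      obtain ⟨⟨⟨h1, h2⟩, h3⟩, h4, h5⟩ := hp
      have e1 := hfspec p.1 h1
      have e2 := hfspec p.2 h2
      exact ⟨⟨h1, by rw [← h4, e1.2]⟩, ⟨h2, by rw [← h5, e2.2]⟩, h3⟩
    have hc1 : Fib.card ≤ (M.filter (fun m => m % q = t.1 % q)).card := by
      apply Finset.card_le_card_of_injOn (fun p => p.1)
      · intro p hp
        obtain ⟨⟨h1, h2⟩, _, _⟩ := hmem p hp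
        exact Finset.mem_filter.2 ⟨h1, h2⟩
      · intro p hp p' hp' hpp
        obtain ⟨_, _, h3⟩ := hmem p hp
        obtain ⟨_, _, h3'⟩ := hmem p' hp'
        have hpp' : p.1 = p'.1 := hpp
        have : p.2 * l = p'.2 * l := by rw [← h3, ← h3', hpp']
        have h2 : p.2 = p'.2 := Nat.eq_of_mul_eq_mul_right hl this
        exact Prod.ext hpp' h2
    have hc2 : Fib.card ≤ (M.filter (fun m => m % q = t.2 % q)).card := by
      apply Finset.card_le_card_of_injOn (fun p => p.2)
      · intro p hp
        obtain ⟨_, ⟨h1, h2⟩, _⟩ := hmem p hp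
        exact Finset.mem_filter.2 ⟨h1, h2⟩
      · intro p hp p' hp' hpp
        obtain ⟨_, _, h3⟩ := hmem p hp
        obtain ⟨_, _, h3'⟩ := hmem p' hp'
        have hpp' : p.2 = p'.2 := hpp
        have : p.1 * k = p'.1 * k := by rw [h3, h3', hpp']
        have h1 : p.1 = p'.1 := Nat.eq_of_mul_eq_mul_right hk this
        exact Prod.ext h1 hpp'
    rw [hr t.1 ha, hr t.2 hb]
    calc (Fib.card : ℝ)
        ≤ min ((M.filter (fun m => m % q = t.1 % q)).card : ℝ)
            ((M.filter (fun m => m % q = t.2 % q)).card : ℝ) := by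
          apply le_min <;> exact_mod_cast ‹_›
      _ ≤ _ := key _ _ (Nat.cast_nonneg _) (Nat.cast_nonneg _)
  rw [hcard]
  push_cast
  exact Finset.sum_le_sum hfiber
end
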